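/- arXiv:2101.07146 — 6 statements merged into one kernel-verified Lean document; each statement's English description precedes it below -/
import Mathlib

section
/- Let f : [a,b] → ℝ be a Lipschitz function and g : [c,d] → ℝ a continuous function, and define h : [a,b] × [c,d] → ℝ by h(x,y) = f(x) + g(y). Then dimH(Gr(h)) = dimH(Gr(g)) + 1. -/
open MeasureTheory Set
open scoped NNReal ENNReal
open Filter EMetric
open scoped Topology

open scoped NNReal ENNReal

variable {Y : Type*} [EMetricSpace Y] [MeasurableSpace Y] [BorelSpace Y]
  [SecondCountableTopology Y]

lemma lower_aux (a b : ℝ) (hab : a < b) (S : Set Y) (d : ℝ) (hd : 0 ≤ d) :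
    ENNReal.ofReal (b - a) * μH[d] S ≤ 2 * μH[d + 1] (Set.Icc a b ×ˢ S) := by
  rw [MeasureTheory.Measure.hausdorffMeasure_apply, ENNReal.mul_iSup]
  simp only [ENNReal.mul_iSup]
  refine iSup₂_le fun r hr => ?_
  rw [MeasureTheory.Measure.hausdorffMeasure_apply]
  refine le_trans ?_ (mul_le_mul_right (le_iSup₂ (f := fun r (_ : 0 < r) =>
    ⨅ (t : ℕ → Set (ℝ × Y)) (_ : Set.Icc a b ×ˢ S ⊆ ⋃ n, t n) (_ : ∀ n, diam (t n) ≤ r),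
      ∑' n, ⨆ _ : (t n).Nonempty, diam (t n) ^ (d+1)) r hr) 2)
  rw [ENNReal.mul_iInf_of_ne two_ne_zero ENNReal.ofNat_ne_top]
  refine le_iInf fun t => ?_
  rw [ENNReal.mul_iInf_of_ne two_ne_zero ENNReal.ofNat_ne_top]
  refine le_iInf fun hcov => ?_
  rw [ENNReal.mul_iInf_of_ne two_ne_zero ENNReal.ofNat_ne_top]
  refine le_iInf fun hdiam => ?_
  -- notation
  set D : ℕ → ℝ≥0∞ := fun n => diam (t n) with hD
  classical
  set B : ℕ → Set ℝ := fun n =>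
    if h : (t n).Nonempty then EMetric.closedBall h.choose.1 (D n) else ∅ with hB
  have hclosed : ∀ (x : ℝ) (e : ℝ≥0∞), MeasurableSet (EMetric.closedBall x e) := by
    intro x e
    have : EMetric.closedBall x e = (fun y : ℝ => edist y x) ⁻¹' Set.Iic e := rfl
    rw [this]
    exact (IsClosed.preimage (continuous_id.edist continuous_const) isClosed_Iic).measurableSet
  have hBmeas : ∀ n, MeasurableSet (B n) := by
    intro n
    by_cases h : (t n).Nonempty <;> simp only [hB, dif_pos, dif_neg, h]
    · exact hclosed _ _
    · exact MeasurableSet.empty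
  have hBvol : ∀ n, volume (B n) ≤ (⨆ _ : (t n).Nonempty, 2 * D n) := by
    intro n
    by_cases h : (t n).Nonempty
    · refine le_trans ?_ (le_iSup (fun _ : (t n).Nonempty => 2 * D n) h)
      simp only [hB]; rw [dif_pos h]
      rcases eq_or_ne (D n) ∞ with hD' | hD'
      · simp [hD']
      · rw [← ENNReal.ofReal_toReal hD']
        change volume (Metric.closedEBall _ _) ≤ _
        rw [Metric.emetric_closedBall ENNReal.toReal_nonneg,
          Real.volume_closedBall, ENNReal.ofReal_mul (by norm_num : (0:ℝ) ≤ 2)]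
        simp
    · simp only [hB]; rw [dif_neg h]; simp
  have hBmem : ∀ n x y, (x, y) ∈ t n → x ∈ B n := by
    intro n x y hxy
    have hne : (t n).Nonempty := ⟨_, hxy⟩
    rw [hB]
    simp only [hne, dif_pos]
    change x ∈ Metric.closedEBall _ _
    rw [EMetric.mem_closedBall]
    calc edist x hne.choose.1 ≤ edist (x, y) hne.choose := by
          rw [Prod.edist_eq]; exact le_max_left _ _
      _ ≤ D n := edist_le_diam_of_mem hxy hne.choose_spec
  -- pointwise slice bound
  set P : ℝ≥0∞ := ⨅ (u : ℕ → Set Y) (_ : S ⊆ ⋃ n, u n) (_ : ∀ n, diam (u n) ≤ r),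
        ∑' n, ⨆ _ : (u n).Nonempty, diam (u n) ^ d with hP
  have hpoint : ∀ x ∈ Set.Icc a b,
      P ≤ ∑' n, (B n).indicator (fun _ => D n ^ d) x := by
    intro x hx
    set u : ℕ → Set Y := fun n => {y | (x, y) ∈ t n} with hu
    have hucov : S ⊆ ⋃ n, u n := by
      intro y hy
      have : (x, y) ∈ ⋃ n, t n := hcov ⟨hx, hy⟩
      simpa only [mem_iUnion, hu, Set.mem_setOf_eq] using this
    have hud : ∀ n, diam (u n) ≤ D n := by
      intro n
      refine diam_le fun y hy y' hy' => ?_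
      calc edist y y' ≤ edist ((x, y) : ℝ × Y) (x, y') := by
            rw [Prod.edist_eq]; exact le_max_right _ _
        _ ≤ D n := edist_le_diam_of_mem hy hy'
    refine le_trans (iInf₂_le_of_le u hucov
      (iInf_le _ (fun n => (hud n).trans (hdiam n)))) ?_
    refine ENNReal.tsum_le_tsum fun n => ?_
    refine iSup_le fun hne => ?_
    obtain ⟨y, hy⟩ := hne
    have hxB : x ∈ B n := hBmem n x y hy
    rw [Set.indicator_of_mem hxB]
    exact ENNReal.rpow_le_rpow (hud n) hd
  have hterm : ∀ n, D n ^ d * (⨆ _ : (t n).Nonempty, 2 * D n)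
      ≤ 2 * ⨆ _ : (t n).Nonempty, D n ^ (d + 1) := by
    intro n
    rw [ENNReal.mul_iSup, ENNReal.mul_iSup]
    refine iSup_le fun hne => le_trans ?_
      (le_iSup (fun _ : (t n).Nonempty => 2 * D n ^ (d + 1)) hne)
    rcases eq_or_ne (D n) 0 with h0 | h0
    · simp [h0]
    rcases eq_or_ne (D n) ∞ with hT | hT
    · rw [hT, ENNReal.top_rpow_of_pos (by linarith : (0:ℝ) < d + 1)]
      exact le_top.trans_eq (by simp)
    · rw [ENNReal.rpow_add d 1 h0 hT, ENNReal.rpow_one, mul_left_comm]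
  calc ENNReal.ofReal (b - a) * P = P * volume (Set.Icc a b) := by
        rw [Real.volume_Icc, mul_comm]
    _ = ∫⁻ _ in Set.Icc a b, P ∂volume := (setLIntegral_const _ _).symm
    _ ≤ ∫⁻ x in Set.Icc a b, ∑' n, (B n).indicator (fun _ => D n ^ d) x ∂volume := by
        refine setLIntegral_mono (Measurable.ennreal_tsum fun n =>
          (measurable_const.indicator (hBmeas n))) hpoint
    _ ≤ ∫⁻ x, ∑' n, (B n).indicator (fun _ => D n ^ d) x ∂volume :=
        setLIntegral_le_lintegral _ _
    _ = ∑' n, ∫⁻ x, (B n).indicator (fun _ => D n ^ d) x ∂volume :=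
        lintegral_tsum fun n => (measurable_const.indicator (hBmeas n)).aemeasurable
    _ = ∑' n, D n ^ d * volume (B n) := by
        refine tsum_congr fun n => ?_
        rw [lintegral_indicator_const (hBmeas n)]
    _ ≤ ∑' n, D n ^ d * (⨆ _ : (t n).Nonempty, 2 * D n) :=
        ENNReal.tsum_le_tsum fun n => mul_le_mul_right (hBvol n) _
    _ ≤ ∑' n, 2 * ⨆ _ : (t n).Nonempty, D n ^ (d + 1) :=
        ENNReal.tsum_le_tsum hterm
    _ = 2 * ∑' n, ⨆ _ : (t n).Nonempty, D n ^ (d + 1) := ENNReal.tsum_mul_left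

lemma upper_aux (a b : ℝ) (S : Set Y) (d : ℝ) (hd : 0 < d) (hS : μH[d] S = 0) :
    μH[d + 1] (Set.Icc a b ×ˢ S) = 0 := by
  -- covers at every scale with small sums
  have hcover : ∀ k : ℕ, ∃ u : ℕ → Set Y, S ⊆ ⋃ n, u n ∧
      (∀ n, diam (u n) ≤ ENNReal.ofReal ((2⁻¹ : ℝ) ^ k)) ∧
      ∑' n, diam (u n) ^ d ≤ ENNReal.ofReal ((2⁻¹ : ℝ) ^ k) := by
    intro k
    have hrk : (0 : ℝ≥0∞) < ENNReal.ofReal ((2⁻¹ : ℝ) ^ k) := by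
      rw [ENNReal.ofReal_pos]; positivity
    rw [MeasureTheory.Measure.hausdorffMeasure_apply] at hS
    have h0 : (⨅ (u : ℕ → Set Y) (_ : S ⊆ ⋃ n, u n)
        (_ : ∀ n, diam (u n) ≤ ENNReal.ofReal ((2⁻¹ : ℝ) ^ k)),
        ∑' n, ⨆ _ : (u n).Nonempty, diam (u n) ^ d) = 0 := by
      refine le_antisymm (le_trans (le_iSup₂ (f := fun r (_ : 0 < r) =>
        ⨅ (u : ℕ → Set Y) (_ : S ⊆ ⋃ n, u n) (_ : ∀ n, diam (u n) ≤ r),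
          ∑' n, ⨆ _ : (u n).Nonempty, diam (u n) ^ d) _ hrk) hS.le) zero_le
    have hlt : (⨅ (u : ℕ → Set Y) (_ : S ⊆ ⋃ n, u n)
        (_ : ∀ n, diam (u n) ≤ ENNReal.ofReal ((2⁻¹ : ℝ) ^ k)),
        ∑' n, ⨆ _ : (u n).Nonempty, diam (u n) ^ d) < ENNReal.ofReal ((2⁻¹ : ℝ) ^ k) := by
      rw [h0]; exact hrk
    rw [iInf_lt_iff] at hlt
    obtain ⟨u, hlt⟩ := hlt
    rw [iInf_lt_iff] at hlt
    obtain ⟨hcov, hlt⟩ := hlt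
    rw [iInf_lt_iff] at hlt
    obtain ⟨hdiam, hlt⟩ := hlt
    refine ⟨u, hcov, hdiam, le_of_lt (lt_of_le_of_lt (le_of_eq ?_) hlt)⟩
    refine tsum_congr fun n => ?_
    rcases eq_empty_or_nonempty (u n) with he | hne
    · simp [he, EMetric.diam, Metric.ediam_empty, ENNReal.zero_rpow_of_pos hd]
    · simp [hne]
  choose u hucov hudiam husum using hcover
  set q : ℝ := (2⁻¹ : ℝ) ^ d with hq
  have hq0 : 0 < q := Real.rpow_pos_of_pos (by norm_num) d
  have hq1 : q < 1 := Real.rpow_lt_one (by norm_num) (by norm_num) hd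
  set ρ : ℕ → ℕ → ℝ := fun k n => max ((diam (u k n)).toReal) ((2⁻¹ : ℝ) ^ (k + n + 1)) with hρ
  have hρpos : ∀ k n, 0 < ρ k n := fun k n =>
    lt_of_lt_of_le (by positivity) (le_max_right _ _)
  have hρle : ∀ k n, ρ k n ≤ (2⁻¹ : ℝ) ^ k := by
    intro k n
    refine max_le ?_ ?_
    · exact ENNReal.toReal_le_of_le_ofReal (by positivity) (hudiam k n)
    · exact pow_le_pow_of_le_one (by norm_num) (by norm_num) (by omega)
  have hρ1 : ∀ k n, ρ k n ≤ 1 :=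
    fun k n => (hρle k n).trans (pow_le_one₀ (by norm_num) (by norm_num))
  set N : ℕ → ℕ → ℕ := fun k n => ⌊(b - a) / ρ k n⌋₊ + 1 with hN
  set t : ∀ k : ℕ, (Σ n : ℕ, Fin (N k n)) → Set (ℝ × Y) := fun k i =>
    Set.Icc (a + ((i.2 : ℕ) : ℝ) * ρ k i.1) (a + (((i.2 : ℕ) : ℝ) + 1) * ρ k i.1) ×ˢ u k i.1
    with ht
  have hdiamt' : ∀ k n (j : Fin (N k n)),
      diam (t k ⟨n, j⟩) ≤ ENNReal.ofReal (ρ k n) := by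
    intro k n j
    have hprod : diam (t k ⟨n, j⟩) ≤
        max (diam (Set.Icc (a + ((j : ℕ) : ℝ) * ρ k n) (a + (((j : ℕ) : ℝ) + 1) * ρ k n)))
          (diam (u k n)) := by
      refine diam_le fun p hp q' hq' => ?_
      rw [Prod.edist_eq]
      exact max_le_max (edist_le_diam_of_mem hp.1 hq'.1) (edist_le_diam_of_mem hp.2 hq'.2)
    refine hprod.trans (max_le ?_ ?_)
    · change Metric.ediam _ ≤ _; rw [Real.ediam_Icc]
      exact ENNReal.ofReal_le_ofReal (by ring_nf; nlinarith [hρpos k n])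
    · have hne : diam (u k n) ≠ ∞ := ne_top_of_le_ne_top ENNReal.ofReal_ne_top (hudiam k n)
      rw [← ENNReal.ofReal_toReal hne]
      exact ENNReal.ofReal_le_ofReal (le_max_left _ _)
  have hdiamt : ∀ k i, diam (t k i) ≤ ENNReal.ofReal ((2⁻¹ : ℝ) ^ k) := by
    rintro k ⟨n, j⟩
    exact (hdiamt' k n j).trans (ENNReal.ofReal_le_ofReal (hρle k n))
  have hcovt : ∀ k, Set.Icc a b ×ˢ S ⊆ ⋃ i, t k i := by
    rintro k ⟨x, y⟩ ⟨hx, hy⟩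
    obtain ⟨n, hn⟩ := mem_iUnion.mp (hucov k hy)
    have hz : 0 ≤ (x - a) / ρ k n := div_nonneg (by linarith [hx.1]) (hρpos k n).le
    have hjN : ⌊(x - a) / ρ k n⌋₊ < N k n := by
      have h1 : ⌊(x - a) / ρ k n⌋₊ ≤ ⌊(b - a) / ρ k n⌋₊ := by
        refine Nat.floor_le_floor ?_
        have hxb : x - a ≤ b - a := by linarith [hx.2]
        exact by gcongr
      simp only [hN]
      omega
    refine mem_iUnion.mpr ⟨⟨n, ⟨⌊(x - a) / ρ k n⌋₊, hjN⟩⟩, ⟨?_, hn⟩⟩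
    have h1 : (⌊(x - a) / ρ k n⌋₊ : ℝ) ≤ (x - a) / ρ k n := Nat.floor_le hz
    have h1' : (⌊(x - a) / ρ k n⌋₊ : ℝ) * ρ k n ≤ x - a := by
      calc (⌊(x - a) / ρ k n⌋₊ : ℝ) * ρ k n ≤ ((x - a) / ρ k n) * ρ k n :=
            mul_le_mul_of_nonneg_right h1 (hρpos k n).le
        _ = x - a := div_mul_cancel₀ _ (hρpos k n).ne'
    have h2 : (x - a) / ρ k n < ⌊(x - a) / ρ k n⌋₊ + 1 := Nat.lt_floor_add_one _
    have h2' : x - a < ((⌊(x - a) / ρ k n⌋₊ : ℝ) + 1) * ρ k n := by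
      calc x - a = ((x - a) / ρ k n) * ρ k n := (div_mul_cancel₀ _ (hρpos k n).ne').symm
        _ < ((⌊(x - a) / ρ k n⌋₊ : ℝ) + 1) * ρ k n := by
            exact mul_lt_mul_of_pos_right h2 (hρpos k n)
    exact ⟨by simpa using by linarith, by simpa using by linarith⟩
  have htend : Tendsto (fun k : ℕ => ENNReal.ofReal ((2⁻¹ : ℝ) ^ k)) atTop (𝓝 0) := by
    have h := tendsto_pow_atTop_nhds_zero_of_lt_one (by norm_num : (0:ℝ) ≤ 2⁻¹)
      (by norm_num : (2⁻¹ : ℝ) < 1)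
    simpa using ENNReal.tendsto_ofReal h
  have key : μH[d + 1] (Set.Icc a b ×ˢ S) ≤
      liminf (fun k => ∑' i, diam (t k i) ^ (d + 1)) atTop :=
    MeasureTheory.Measure.hausdorffMeasure_le_liminf_tsum (d + 1) _ (fun k => ENNReal.ofReal ((2⁻¹ : ℝ) ^ k))
      htend t (Filter.Eventually.of_forall hdiamt) (Filter.Eventually.of_forall hcovt)
  set M : ℝ := max (b - a) 0 + 1 with hM
  have hM0 : 0 < M := by positivity
  set Q : ℝ≥0∞ := ENNReal.ofReal q with hQ
  have hQ1 : Q < 1 := by rw [hQ, ← ENNReal.ofReal_one]; exact ENNReal.ofReal_lt_ofReal_iff (by norm_num) |>.mpr hq1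
  set g : ℕ → ℝ≥0∞ := fun k =>
    ENNReal.ofReal M * (ENNReal.ofReal ((2⁻¹ : ℝ) ^ k) + Q ^ (k + 1) * (1 - Q)⁻¹) with hg
  have hsum_le : ∀ k, (∑' i, diam (t k i) ^ (d + 1)) ≤ g k := by
    intro k
    rw [ENNReal.tsum_sigma']
    have hterm : ∀ n (j : Fin (N k n)),
        diam (t k ⟨n, j⟩) ^ (d + 1) ≤ ENNReal.ofReal (ρ k n ^ (d + 1)) := by
      intro n j
      calc diam (t k ⟨n, j⟩) ^ (d + 1) ≤ ENNReal.ofReal (ρ k n) ^ (d + 1) :=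
            ENNReal.rpow_le_rpow (hdiamt' k n j) (by linarith)
        _ = ENNReal.ofReal (ρ k n ^ (d + 1)) :=
            ENNReal.ofReal_rpow_of_nonneg (hρpos k n).le (by linarith)
    calc (∑' n, ∑' j : Fin (N k n), diam (t k ⟨n, j⟩) ^ (d + 1))
        ≤ ∑' n, ∑' _j : Fin (N k n), ENNReal.ofReal (ρ k n ^ (d + 1)) :=
          ENNReal.tsum_le_tsum fun n => ENNReal.tsum_le_tsum fun j => hterm n j
      _ = ∑' n, (N k n : ℝ≥0∞) * ENNReal.ofReal (ρ k n ^ (d + 1)) := by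
          refine tsum_congr fun n => ?_
          rw [tsum_fintype]
          simp [Finset.sum_const, Fintype.card_fin, nsmul_eq_mul]
      _ ≤ ∑' n, ENNReal.ofReal M *
            (ENNReal.ofReal ((diam (u k n)).toReal ^ d) +
              ENNReal.ofReal (((2⁻¹ : ℝ) ^ (k + n + 1)) ^ d)) := by
          refine ENNReal.tsum_le_tsum fun n => ?_
          have hAB0 : (0:ℝ) ≤ (diam (u k n)).toReal ^ d := Real.rpow_nonneg ENNReal.toReal_nonneg d
          have hB0 : (0:ℝ) ≤ ((2⁻¹ : ℝ) ^ (k + n + 1)) ^ d := Real.rpow_nonneg (by positivity) d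
          have hρd : ρ k n ^ d ≤ (diam (u k n)).toReal ^ d + ((2⁻¹ : ℝ) ^ (k + n + 1)) ^ d := by
            rcases max_cases ((diam (u k n)).toReal) ((2⁻¹ : ℝ) ^ (k + n + 1)) with
              ⟨hm, _⟩ | ⟨hm, _⟩ <;> rw [hρ] <;> simp only [] <;> rw [hm] <;> linarith
          have hfloor : (⌊(b - a) / ρ k n⌋₊ : ℝ) * ρ k n ≤ max (b - a) 0 := by
            rcases le_or_gt 0 ((b - a) / ρ k n) with hc | hc
            · calc (⌊(b - a) / ρ k n⌋₊ : ℝ) * ρ k n ≤ ((b - a) / ρ k n) * ρ k n :=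
                  mul_le_mul_of_nonneg_right (Nat.floor_le hc) (hρpos k n).le
                _ = b - a := div_mul_cancel₀ _ (hρpos k n).ne'
                _ ≤ max (b - a) 0 := le_max_left _ _
            · rw [Nat.floor_of_nonpos hc.le]
              simp
          have h1 : (N k n : ℝ) * ρ k n ≤ M := by
            have hNr : (N k n : ℝ) = (⌊(b - a) / ρ k n⌋₊ : ℝ) + 1 := by
              rw [hN]; push_cast; ring
            rw [hNr, add_mul, one_mul, hM]
            have := hρ1 k n
            linarith
          have hreal : (N k n : ℝ) * ρ k n ^ (d + 1) ≤
              M * ((diam (u k n)).toReal ^ d + ((2⁻¹ : ℝ) ^ (k + n + 1)) ^ d) := by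
            calc (N k n : ℝ) * ρ k n ^ (d + 1) = ((N k n : ℝ) * ρ k n) * ρ k n ^ d := by
                  rw [Real.rpow_add (hρpos k n), Real.rpow_one]; ring
              _ ≤ M * ((diam (u k n)).toReal ^ d + ((2⁻¹ : ℝ) ^ (k + n + 1)) ^ d) := by
                  refine mul_le_mul h1 hρd (Real.rpow_nonneg (hρpos k n).le d) hM0.le
          calc (N k n : ℝ≥0∞) * ENNReal.ofReal (ρ k n ^ (d + 1))
              = ENNReal.ofReal ((N k n : ℝ) * ρ k n ^ (d + 1)) := by
                rw [ENNReal.ofReal_mul (by positivity), ENNReal.ofReal_natCast]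
            _ ≤ ENNReal.ofReal (M * ((diam (u k n)).toReal ^ d +
                  ((2⁻¹ : ℝ) ^ (k + n + 1)) ^ d)) := ENNReal.ofReal_le_ofReal hreal
            _ = _ := by rw [ENNReal.ofReal_mul hM0.le, ENNReal.ofReal_add hAB0 hB0]
      _ = ENNReal.ofReal M * ((∑' n, ENNReal.ofReal ((diam (u k n)).toReal ^ d)) +
            ∑' n, ENNReal.ofReal (((2⁻¹ : ℝ) ^ (k + n + 1)) ^ d)) := by
          rw [ENNReal.tsum_mul_left, ENNReal.tsum_add]
      _ ≤ g k := by
          rw [hg]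
          refine mul_le_mul_right (add_le_add ?_ (le_of_eq ?_)) _
          · have heq : ∀ n, ENNReal.ofReal ((diam (u k n)).toReal ^ d) = diam (u k n) ^ d := by
              intro n
              have hne : diam (u k n) ≠ ∞ :=
                ne_top_of_le_ne_top ENNReal.ofReal_ne_top (hudiam k n)
              rw [← ENNReal.ofReal_rpow_of_nonneg ENNReal.toReal_nonneg hd.le,
                ENNReal.ofReal_toReal hne]
            calc (∑' n, ENNReal.ofReal ((diam (u k n)).toReal ^ d))
                = ∑' n, diam (u k n) ^ d := tsum_congr heq
              _ ≤ ENNReal.ofReal ((2⁻¹ : ℝ) ^ k) := husum k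
          · have heq : ∀ n : ℕ, ENNReal.ofReal (((2⁻¹ : ℝ) ^ (k + n + 1)) ^ d)
                = Q ^ (k + 1) * Q ^ n := by
              intro n
              have h2 : ((2⁻¹ : ℝ) ^ (k + n + 1)) ^ d = q ^ (k + n + 1) := by
                rw [hq, ← Real.rpow_natCast (2⁻¹ : ℝ) (k + n + 1),
                  ← Real.rpow_natCast ((2⁻¹:ℝ) ^ d) (k + n + 1),
                  ← Real.rpow_mul (by norm_num), ← Real.rpow_mul (by norm_num)]
                ring_nf
              rw [h2, ENNReal.ofReal_pow hq0.le, ← pow_add, hQ]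
              congr 1
              omega
            calc (∑' n, ENNReal.ofReal (((2⁻¹ : ℝ) ^ (k + n + 1)) ^ d))
                = ∑' n, Q ^ (k + 1) * Q ^ n := tsum_congr heq
              _ = Q ^ (k + 1) * (1 - Q)⁻¹ := by
                  rw [ENNReal.tsum_mul_left, ENNReal.tsum_geometric]
  have hCne : (1 - Q)⁻¹ ≠ ∞ := by
    rw [ENNReal.inv_ne_top]
    exact (tsub_pos_of_lt hQ1).ne'
  have hlim : Tendsto g atTop (𝓝 0) := by
    have h2 : Tendsto (fun k : ℕ => Q ^ (k + 1) * (1 - Q)⁻¹) atTop (𝓝 0) := by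
      have hpow : Tendsto (fun k : ℕ => Q ^ k) atTop (𝓝 0) :=
        ENNReal.tendsto_pow_atTop_nhds_zero_of_lt_one hQ1
      have hpow' : Tendsto (fun k : ℕ => Q ^ (k + 1)) atTop (𝓝 0) :=
        hpow.comp (tendsto_add_atTop_nat 1)
      simpa using ENNReal.Tendsto.mul_const hpow' (Or.inr hCne)
    have h3 := htend.add h2
    rw [add_zero] at h3
    have h4 := ENNReal.Tendsto.const_mul (a := ENNReal.ofReal M) h3 (Or.inr ENNReal.ofReal_ne_top)
    rw [mul_zero] at h4
    exact h4
  refine le_antisymm ?_ zero_le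
  calc μH[d + 1] (Set.Icc a b ×ˢ S)
      ≤ liminf (fun k => ∑' i, diam (t k i) ^ (d + 1)) atTop := key
    _ ≤ liminf g atTop := liminf_le_liminf (Filter.Eventually.of_forall hsum_le)
    _ = 0 := hlim.liminf_eq

/-- If `f : [a,b] → ℝ` is Lipschitz and `g : [c,d] → ℝ` is continuous, and
`h(x,y) = f x + g y` on `[a,b] × [c,d]`, then `dimH (Gr h) = dimH (Gr g) + 1`. -/
theorem dimH_graph_sum_of_lipschitz_add_continuous (a b c d : ℝ) (hab : a < b) (hcd : c < d)
    (f g : ℝ → ℝ) (K : ℝ≥0) (hf : LipschitzOnWith K f (Set.Icc a b))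
    (hg : ContinuousOn g (Set.Icc c d))
    (h : ℝ × ℝ → ℝ) (hh : ∀ p : ℝ × ℝ, h p = f p.1 + g p.2) :
    dimH ((fun p : ℝ × ℝ => (p, h p)) '' (Set.Icc a b ×ˢ Set.Icc c d)) =
      dimH ((fun y : ℝ => (y, g y)) '' Set.Icc c d) + 1 := by
  obtain ⟨F, hF, hFeq⟩ := hf.extend_real
  set G : Set (ℝ × ℝ) := (fun y : ℝ => (y, g y)) '' Set.Icc c d with hG
  set T : Set (ℝ × (ℝ × ℝ)) := Set.Icc a b ×ˢ G with hT
  set Φ : ℝ × (ℝ × ℝ) → (ℝ × ℝ) × ℝ := fun p => ((p.1, p.2.1), F p.1 + p.2.2) with hΦ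
  set Ψ : (ℝ × ℝ) × ℝ → ℝ × (ℝ × ℝ) := fun w => (w.1.1, (w.1.2, w.2 - F w.1.1)) with hΨ
  have hΦlip : ∃ L : ℝ≥0, LipschitzWith L Φ :=
    ⟨_, LipschitzWith.prodMk
      (LipschitzWith.prodMk LipschitzWith.prod_fst
        (LipschitzWith.prod_fst.comp LipschitzWith.prod_snd))
      ((hF.comp LipschitzWith.prod_fst).add
        (LipschitzWith.prod_snd.comp LipschitzWith.prod_snd))⟩
  have hΨlip : ∃ L : ℝ≥0, LipschitzWith L Ψ :=
    ⟨_, LipschitzWith.prodMk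
      (LipschitzWith.prod_fst.comp LipschitzWith.prod_fst)
      (LipschitzWith.prodMk (LipschitzWith.prod_snd.comp LipschitzWith.prod_fst)
        (LipschitzWith.prod_snd.sub
          (hF.comp (LipschitzWith.prod_fst.comp LipschitzWith.prod_fst))))⟩
  have hΨΦ : ∀ p, Ψ (Φ p) = p := by intro p; simp [hΦ, hΨ]
  have him : (fun p : ℝ × ℝ => (p, h p)) '' (Set.Icc a b ×ˢ Set.Icc c d) = Φ '' T := by
    ext w
    constructor
    · rintro ⟨⟨x, y⟩, ⟨hx, hy⟩, rfl⟩
      exact ⟨(x, (y, g y)), ⟨hx, Set.mem_image_of_mem _ hy⟩, by simp [hΦ, hh, hFeq hx]⟩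
    · rintro ⟨⟨x, yt⟩, ⟨hx, ⟨y, hy, rfl⟩⟩, rfl⟩
      exact ⟨(x, y), ⟨hx, hy⟩, by simp [hΦ, hh, hFeq hx]⟩
  have hdim1 : dimH ((fun p : ℝ × ℝ => (p, h p)) '' (Set.Icc a b ×ˢ Set.Icc c d)) = dimH T := by
    rw [him]
    refine le_antisymm ?_ ?_
    · obtain ⟨L, hL⟩ := hΦlip
      exact hL.dimH_image_le T
    · obtain ⟨L, hL⟩ := hΨlip
      have hback : Ψ '' (Φ '' T) = T := by
        rw [← Set.image_comp, show (Ψ ∘ Φ) = id from funext hΨΦ, Set.image_id]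
      calc dimH T = dimH (Ψ '' (Φ '' T)) := by rw [hback]
        _ ≤ dimH (Φ '' T) := hL.dimH_image_le _
  have hA1 : (1 : ℝ≥0∞) ≤ dimH G := by
    have hproj : Prod.fst '' G = Set.Icc c d := by
      rw [hG, ← Set.image_comp]
      simp [Function.comp_def]
    have h1 : dimH (Set.Icc c d) = 1 := by
      rw [Real.dimH_of_nonempty_interior (by rw [interior_Icc]; exact nonempty_Ioo.mpr hcd)]
      simp
    calc (1 : ℝ≥0∞) = dimH (Set.Icc c d) := h1.symm
      _ = dimH (Prod.fst '' G) := by rw [hproj]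
      _ ≤ dimH G := LipschitzWith.prod_fst.dimH_image_le G
  have hA2 : dimH G ≠ ∞ := by
    refine ne_top_of_le_ne_top ?_ (dimH_mono (Set.subset_univ G))
    rw [Real.dimH_univ_eq_finrank]
    exact ENNReal.natCast_ne_top _
  have hTdim : dimH T = dimH G + 1 := by
    refine le_antisymm ?_ ?_
    · refine ENNReal.le_of_forall_pos_le_add fun ε hε _ => ?_
      obtain ⟨s, hs1, hs2⟩ := ENNReal.lt_iff_exists_nnreal_btwn.mp
        (ENNReal.lt_add_right hA2 (ENNReal.coe_ne_zero.mpr hε.ne'))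
      have hs1' : (1 : ℝ≥0∞) < (s : ℝ≥0∞) := lt_of_le_of_lt hA1 hs1
      have hs0 : (0 : ℝ) < (s : ℝ) := by
        have h1s : (1 : ℝ) < (s : ℝ) := by exact_mod_cast hs1'
        linarith
      have hz : μH[(s : ℝ)] G = 0 := hausdorffMeasure_of_dimH_lt hs1
      have h0 := upper_aux a b G (s : ℝ) hs0 hz
      have hle : dimH T ≤ ((s + 1 : ℝ≥0) : ℝ≥0∞) := by
        refine dimH_le_of_hausdorffMeasure_ne_top ?_
        have hcast : ((s + 1 : ℝ≥0) : ℝ) = (s : ℝ) + 1 := by push_cast; ring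
        rw [hT, hcast, h0]
        exact ENNReal.zero_ne_top
      calc dimH T ≤ ((s + 1 : ℝ≥0) : ℝ≥0∞) := hle
        _ = (s : ℝ≥0∞) + 1 := by push_cast; ring
        _ ≤ (dimH G + ε) + 1 := add_le_add_left hs2.le _
        _ = dimH G + 1 + ε := by ring
    · refine ENNReal.le_of_forall_nnreal_lt fun r hr => ?_
      set s : ℝ≥0 := r - 1 with hs
      have hsA : (s : ℝ≥0∞) < dimH G := by
        rcases le_or_gt r 1 with h1 | h1
        · have hzero : s = 0 := tsub_eq_zero_of_le h1
          rw [hzero]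
          exact lt_of_lt_of_le (by norm_num) hA1
        · have hcoe : (s : ℝ≥0∞) = (r : ℝ≥0∞) - 1 := by
            rw [hs, ENNReal.coe_sub]; simp
          rw [hcoe, ENNReal.sub_lt_iff_lt_right (by simp) (by exact_mod_cast h1.le)]
          exact hr
      have hrs : (r : ℝ≥0∞) ≤ (s : ℝ≥0∞) + 1 := by
        rcases le_or_gt r 1 with h1 | h1
        · exact le_trans (by exact_mod_cast h1 : (r : ℝ≥0∞) ≤ 1) le_add_self
        · have hsum : s + 1 = r := tsub_add_cancel_of_le h1.le
          exact_mod_cast hsum.ge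
      have hinf : μH[(s : ℝ)] G = ∞ := hausdorffMeasure_of_lt_dimH hsA
      have hlow := lower_aux a b hab G (s : ℝ) s.coe_nonneg
      rw [hinf] at hlow
      have hne0 : ENNReal.ofReal (b - a) ≠ 0 := by
        rw [Ne, ENNReal.ofReal_eq_zero, not_le]
        linarith
      rw [ENNReal.mul_top hne0] at hlow
      have htop : μH[(s : ℝ) + 1] T = ∞ := by
        by_contra hc
        exact (ENNReal.mul_ne_top ENNReal.ofNat_ne_top hc) (top_le_iff.mp hlow)
      have hge : ((s + 1 : ℝ≥0) : ℝ≥0∞) ≤ dimH T := by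
        refine le_dimH_of_hausdorffMeasure_eq_top ?_
        have hcast : ((s + 1 : ℝ≥0) : ℝ) = (s : ℝ) + 1 := by push_cast; ring
        rw [hcast]
        exact htop
      calc (r : ℝ≥0∞) ≤ (s : ℝ≥0∞) + 1 := hrs
        _ = ((s + 1 : ℝ≥0) : ℝ≥0∞) := by push_cast; ring
        _ ≤ dimH T := hge
  rw [hdim1, hTdim]
end

section
/- Let (X,d) be a compact metric space, let (Y,‖·‖_Y) be a real normed linear space, and let β ≥ 0. Suppose there exists a continuous function h : X → Y with h(x) ≠ 0 for every x ∈ X and dimH(Gr(h)) = β. Then the set S_β := {f ∈ C(X,Y) : dimH(Gr(f)) = β} is dense in C(X,Y) with respect to the supremum norm. -/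
open MeasureTheory Set
open scoped NNReal ENNReal

/-- A bi-Lipschitz "shear" of `X × Y` given by a Lipschitz `g` and a scalar `c`. -/
private lemma lipschitz_shear {X Y : Type*} [MetricSpace X] [NormedAddCommGroup Y]
    [NormedSpace ℝ Y] {K : ℝ≥0} {g : X → Y} (hg : LipschitzWith K g) (c : ℝ) :
    ∃ K' : ℝ≥0, LipschitzWith K' (fun p : X × Y => (p.1, g p.1 + c • p.2)) :=
  ⟨_, LipschitzWith.prodMk LipschitzWith.prod_fst
    ((hg.comp LipschitzWith.prod_fst).add
      ((lipschitzWith_smul c).comp LipschitzWith.prod_snd))⟩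

/-- Lipschitz functions are dense in `C(X,Y)` for `X` compact metric and `Y` normed. -/
private lemma exists_lipschitz_near {X Y : Type*} [MetricSpace X] [CompactSpace X]
    [NormedAddCommGroup Y] [NormedSpace ℝ Y] (f : C(X, Y)) {ε : ℝ} (hε : 0 < ε) :
    ∃ (K : ℝ≥0) (g : C(X, Y)), LipschitzWith K g ∧ ‖f - g‖ < ε := by
  rcases isEmpty_or_nonempty X with hX | hX
  · refine ⟨1, f, LipschitzWith.of_dist_le_mul fun x y => (IsEmpty.false x).elim, ?_⟩
    simpa using hε
  -- uniform continuity
  have huc := Metric.uniformContinuous_iff.1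
    (CompactSpace.uniformContinuous_of_continuous f.continuous)
  obtain ⟨δ, hδ, hδf⟩ := huc (ε / 2) (by positivity)
  -- finite cover by balls of radius δ/2
  obtain ⟨t, ht⟩ := isCompact_univ.elim_finite_subcover
    (fun i : X => Metric.ball i (δ / 2)) (fun i => Metric.isOpen_ball)
    (fun x _ => Set.mem_iUnion.2 ⟨x, by simp [Metric.mem_ball, hδ]⟩)
  have hcover : ∀ x : X, ∃ i ∈ t, dist x i < δ / 2 := by
    intro x
    have := ht (Set.mem_univ x)
    simp only [Set.mem_iUnion, Metric.mem_ball] at this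
    simpa using this
  -- the bump functions
  set φ : X → X → ℝ := fun i x => max (δ / 2 - dist x i) 0 with hφ
  have hφ_nonneg : ∀ i x, 0 ≤ φ i x := fun i x => le_max_right _ _
  have hφ_lip : ∀ i x y, |φ i x - φ i y| ≤ dist x y := by
    intro i x y
    refine (abs_max_sub_max_le_abs _ _ _).trans ?_
    rw [sub_sub_sub_cancel_left]
    exact (abs_dist_sub_le _ _ _).trans_eq (dist_comm x y ▸ rfl)
  have hφ_pos : ∀ i x, dist x i < δ / 2 → 0 < φ i x := by
    intro i x hd; exact lt_max_of_lt_left (by linarith)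
  have hφ_close : ∀ i x, 0 < φ i x → dist x i < δ := by
    intro i x hp
    rcases lt_or_ge (dist x i) (δ / 2) with h | h
    · linarith
    · exfalso; have : φ i x = 0 := max_eq_right (by linarith)
      rw [this] at hp; exact lt_irrefl _ hp
  set den : X → ℝ := fun x => ∑ i ∈ t, φ i x with hden
  set num : X → Y := fun x => ∑ i ∈ t, φ i x • f i with hnum
  have hden_pos : ∀ x, 0 < den x := by
    intro x
    obtain ⟨i, hi, hdi⟩ := hcover x
    exact Finset.sum_pos' (fun j _ => hφ_nonneg j x) ⟨i, hi, hφ_pos i x hdi⟩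
  have hden_cont : Continuous den := by
    apply continuous_finset_sum
    intro i _
    exact (continuous_const.sub (continuous_id.dist continuous_const)).max continuous_const
  have hnum_cont : Continuous num := by
    apply continuous_finset_sum
    intro i _
    exact (((continuous_const.sub (continuous_id.dist continuous_const)).max
      continuous_const).smul continuous_const)
  -- lower bound on den
  obtain ⟨x₀, -, hx₀⟩ := isCompact_univ.exists_isMinOn (Set.univ_nonempty)
    hden_cont.continuousOn
  set c : ℝ := den x₀ with hc
  have hc_pos : 0 < c := hden_pos x₀
  have hden_ge : ∀ x, c ≤ den x := fun x => hx₀ (Set.mem_univ x)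
  -- bounds
  set M : ℝ := ‖f‖ with hM
  have hM0 : 0 ≤ M := norm_nonneg _
  have hfM : ∀ i : X, ‖f i‖ ≤ M := fun i => f.norm_coe_le_norm i
  have hden_lip : ∀ x y, |den x - den y| ≤ (t.card : ℝ) * dist x y := by
    intro x y
    rw [hden]
    simp only
    rw [← Finset.sum_sub_distrib]
    refine (Finset.abs_sum_le_sum_abs _ _).trans ?_
    calc ∑ i ∈ t, |φ i x - φ i y| ≤ ∑ _i ∈ t, dist x y :=
          Finset.sum_le_sum fun i _ => hφ_lip i x y
      _ = (t.card : ℝ) * dist x y := by simp [mul_comm]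
  have hnum_lip : ∀ x y, ‖num x - num y‖ ≤ (t.card : ℝ) * M * dist x y := by
    intro x y
    rw [hnum]
    simp only
    rw [← Finset.sum_sub_distrib]
    refine (norm_sum_le _ _).trans ?_
    calc ∑ i ∈ t, ‖φ i x • f i - φ i y • f i‖
        = ∑ i ∈ t, |φ i x - φ i y| * ‖f i‖ := by
          refine Finset.sum_congr rfl fun i _ => ?_
          rw [← sub_smul, norm_smul, Real.norm_eq_abs]
      _ ≤ ∑ _i ∈ t, dist x y * M := by
          refine Finset.sum_le_sum fun i _ => ?_
          exact mul_le_mul (hφ_lip i x y) (hfM i) (norm_nonneg _) dist_nonneg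
      _ = (t.card : ℝ) * M * dist x y := by ring_nf; simp [Finset.sum_const, mul_comm,
          mul_assoc, mul_left_comm]
  have hnum_bound : ∀ x, ‖num x‖ ≤ den x * M := by
    intro x
    refine (norm_sum_le _ _).trans ?_
    rw [hden]
    simp only
    rw [Finset.sum_mul]
    refine Finset.sum_le_sum fun i _ => ?_
    rw [norm_smul, Real.norm_eq_abs, abs_of_nonneg (hφ_nonneg i x)]
    exact mul_le_mul_of_nonneg_left (hfM i) (hφ_nonneg i x)
  -- the approximant
  set g : C(X, Y) := ⟨fun x => (den x)⁻¹ • num x,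
    ((hden_cont.inv₀ fun x => (hden_pos x).ne').smul hnum_cont)⟩ with hg
  have hgx : ∀ x, g x = (den x)⁻¹ • num x := fun x => rfl
  -- Lipschitz estimate
  refine ⟨Real.toNNReal (2 * t.card * M / c), g, ?_, ?_⟩
  · apply LipschitzWith.of_dist_le_mul
    intro x y
    have hdx := hden_pos x
    have hdy := hden_pos y
    rw [dist_eq_norm, hgx, hgx]
    have key : (den x)⁻¹ • num x - (den y)⁻¹ • num y
        = (den x)⁻¹ • (num x - num y) + ((den x)⁻¹ - (den y)⁻¹) • num y := by
      rw [smul_sub, sub_smul]; abel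
    rw [key]
    have h1 : ‖(den x)⁻¹ • (num x - num y)‖ ≤ c⁻¹ * ((t.card : ℝ) * M * dist x y) := by
      rw [norm_smul, Real.norm_eq_abs, abs_of_nonneg (inv_nonneg.2 hdx.le)]
      exact mul_le_mul (inv_anti₀ hc_pos (hden_ge x)) (hnum_lip x y)
        (norm_nonneg _) (inv_nonneg.2 hc_pos.le)
    have h2 : ‖((den x)⁻¹ - (den y)⁻¹) • num y‖ ≤ c⁻¹ * ((t.card : ℝ) * M * dist x y) := by
      rw [norm_smul, Real.norm_eq_abs]
      have hinv : |(den x)⁻¹ - (den y)⁻¹| = |den y - den x| / (den x * den y) := by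
        rw [inv_sub_inv hdx.ne' hdy.ne', abs_div, abs_of_pos (mul_pos hdx hdy)]
      rw [hinv, div_mul_eq_mul_div, div_le_iff₀ (mul_pos hdx hdy)]
      have hA1 : (1 : ℝ) ≤ c⁻¹ * den x := by
        rw [← inv_mul_cancel₀ hc_pos.ne']
        exact mul_le_mul_of_nonneg_left (hden_ge x) (by positivity)
      calc |den y - den x| * ‖num y‖
          ≤ ((t.card : ℝ) * dist x y) * (den y * M) := by
            refine mul_le_mul ?_ (hnum_bound y) (norm_nonneg _) (by positivity)
            rw [abs_sub_comm]; exact hden_lip x y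
        _ = ((t.card : ℝ) * M * dist x y * den y) * 1 := by ring
        _ ≤ ((t.card : ℝ) * M * dist x y * den y) * (c⁻¹ * den x) := by
            refine mul_le_mul_of_nonneg_left hA1 (by positivity)
        _ = c⁻¹ * ((t.card : ℝ) * M * dist x y) * (den x * den y) := by ring
    calc ‖(den x)⁻¹ • (num x - num y) + ((den x)⁻¹ - (den y)⁻¹) • num y‖
        ≤ ‖(den x)⁻¹ • (num x - num y)‖ + ‖((den x)⁻¹ - (den y)⁻¹) • num y‖ := norm_add_le _ _
      _ ≤ c⁻¹ * ((t.card : ℝ) * M * dist x y) + c⁻¹ * ((t.card : ℝ) * M * dist x y) := by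
          linarith
      _ = (2 * t.card * M / c) * dist x y := by ring
      _ ≤ (Real.toNNReal (2 * t.card * M / c) : ℝ) * dist x y := by
          refine mul_le_mul_of_nonneg_right ?_ dist_nonneg
          exact (Real.le_coe_toNNReal _)
  · -- closeness
    have hbound : ∀ x, ‖(f - g) x‖ ≤ ε / 2 := by
      intro x
      have hdx := hden_pos x
      have : f x - g x = (den x)⁻¹ • (∑ i ∈ t, φ i x • (f x - f i)) := by
        rw [hgx]
        have : (∑ i ∈ t, φ i x • (f x - f i)) = den x • f x - num x := by
          rw [hden, hnum]
          simp only [smul_sub, Finset.sum_sub_distrib, Finset.sum_smul]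
        rw [this, smul_sub, smul_smul, inv_mul_cancel₀ hdx.ne', one_smul]
      rw [ContinuousMap.sub_apply, this, norm_smul, Real.norm_eq_abs,
        abs_of_nonneg (inv_nonneg.2 hdx.le)]
      have hsum : ‖∑ i ∈ t, φ i x • (f x - f i)‖ ≤ den x * (ε / 2) := by
        refine (norm_sum_le _ _).trans ?_
        rw [hden]
        simp only
        rw [Finset.sum_mul]
        refine Finset.sum_le_sum fun i _ => ?_
        rw [norm_smul, Real.norm_eq_abs, abs_of_nonneg (hφ_nonneg i x)]
        rcases eq_or_lt_of_le (hφ_nonneg i x) with h0 | h0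
        · rw [← h0, zero_mul, zero_mul]
        · refine mul_le_mul_of_nonneg_left ?_ (hφ_nonneg i x)
          have := hδf (hφ_close i x h0)
          rw [dist_eq_norm] at this
          exact this.le
      calc (den x)⁻¹ * ‖∑ i ∈ t, φ i x • (f x - f i)‖
          ≤ (den x)⁻¹ * (den x * (ε / 2)) :=
            mul_le_mul_of_nonneg_left hsum (inv_nonneg.2 hdx.le)
        _ = ε / 2 := by field_simp
    have : ‖f - g‖ ≤ ε / 2 := (ContinuousMap.norm_le _ (by positivity)).2 hbound
    linarith

/-- Let `X` be a compact metric space, `Y` a real normed linear space and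
`β ≥ 0`. If there is a continuous, nowhere vanishing `h : X → Y` whose graph has Hausdorff
dimension `β`, then `S_β = {f ∈ C(X,Y) : dimH (Gr f) = β}` is dense in `C(X,Y)` (with the
supremum norm topology). -/
theorem dense_of_exists_nonvanishing_graph_dimH {X Y : Type*} [MetricSpace X] [CompactSpace X]
    [NormedAddCommGroup Y] [NormedSpace ℝ Y]
    (β : ℝ) (hβ : 0 ≤ β)
    (h : C(X, Y)) (hne : ∀ x : X, h x ≠ 0)
    (hdim : dimH (Set.range fun x : X => (x, h x)) = ENNReal.ofReal β) :
    Dense {f : C(X, Y) | dimH (Set.range fun x : X => (x, f x)) = ENNReal.ofReal β} := by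
  rw [Metric.dense_iff]
  intro f ε hε
  obtain ⟨K, g, hgLip, hfg⟩ := exists_lipschitz_near f (half_pos hε)
  set c : ℝ := ε / (2 * (‖h‖ + 1)) with hc
  have hpos : (0 : ℝ) < ‖h‖ + 1 := by positivity
  have hc_pos : 0 < c := by positivity
  set F : C(X, Y) := g + c • h with hF
  have hFx : ∀ x, F x = g x + c • h x := fun x => rfl
  -- distance estimate
  have hdist : dist F f < ε := by
    have h1 : ‖c • h‖ ≤ c * ‖h‖ := by
      rw [norm_smul, Real.norm_eq_abs, abs_of_pos hc_pos]
    have h2 : c * ‖h‖ < ε / 2 := by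
      rw [hc, div_mul_eq_mul_div, div_lt_iff₀ (by positivity)]
      have : ε * ‖h‖ < ε * (‖h‖ + 1) := by nlinarith
      calc ε * ‖h‖ < ε * (‖h‖ + 1) := this
        _ = ε / 2 * (2 * (‖h‖ + 1)) := by ring
    calc dist F f = ‖g + c • h - f‖ := by rw [dist_eq_norm]
      _ ≤ ‖g - f‖ + ‖c • h‖ := by
          rw [show g + c • h - f = (g - f) + c • h by abel]
          exact norm_add_le _ _
      _ < ε / 2 + ε / 2 := by
          rw [← norm_sub_rev]
          exact add_lt_add (hfg) (lt_of_le_of_lt h1 h2)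
      _ = ε := by ring
  -- dimension of the graph of F
  have hdimF : dimH (Set.range fun x : X => (x, F x)) = ENNReal.ofReal β := by
    set Φ : X × Y → X × Y := fun p => (p.1, g p.1 + c • p.2) with hΦ
    set Ψ : X × Y → X × Y := fun p => (p.1, (-(c⁻¹ : ℝ)) • g p.1 + c⁻¹ • p.2) with hΨ
    obtain ⟨K₁, hΦlip⟩ := lipschitz_shear (g := ⇑g) hgLip c
    obtain ⟨K₂, hΨlip⟩ := lipschitz_shear (g := fun x => (-(c⁻¹ : ℝ)) • g x)
      ((lipschitzWith_smul (-(c⁻¹ : ℝ))).comp hgLip) c⁻¹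
    have himg : (Set.range fun x : X => (x, F x)) =
        Φ '' (Set.range fun x : X => (x, h x)) := by
      rw [← Set.range_comp]
      rfl
    have himg' : (Set.range fun x : X => (x, h x)) =
        Ψ '' (Set.range fun x : X => (x, F x)) := by
      rw [← Set.range_comp]
      refine congrArg _ (funext fun x => ?_)
      show (x, h x) = (x, (-(c⁻¹ : ℝ)) • g x + c⁻¹ • F x)
      rw [hFx, smul_add, smul_smul, inv_mul_cancel₀ hc_pos.ne', one_smul, neg_smul,
        neg_add_cancel_left]
    apply le_antisymm
    · rw [himg, ← hdim]
      exact hΦlip.dimH_image_le _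
    · calc ENNReal.ofReal β = dimH (Set.range fun x : X => (x, h x)) := hdim.symm
        _ = dimH (Ψ '' (Set.range fun x : X => (x, F x))) := by rw [← himg']
        _ ≤ dimH (Set.range fun x : X => (x, F x)) := hΨlip.dimH_image_le _
  exact ⟨F, Metric.mem_ball.2 hdist, hdimF⟩
end

section
/- Let R = [a,b] × [c,d], let g_1, …, g_n be linearly independent continuous real-valued functions on R, and let V = span{g_1, …, g_n}. Let f : R → ℝ be bounded below and Lebesgue integrable, and suppose the set Y_n(f) := {h ∈ V : h(x) ≤ f(x) for all x ∈ R} is nonempty. Then there exists h_f ∈ Y_n(f) such that ∫_R h_f(x) dx = sup{ ∫_R h(x) dx : h ∈ Y_n(f) } — i.e., a best one-sided approximant from below to f on R exists in V. -/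
open MeasureTheory Set Filter Topology
open scoped NNReal ENNReal

lemma nonpos_cont_integral_zero (a b c d : ℝ) (hab : a < b) (hcd : c < d)
    (h : ℝ × ℝ → ℝ) (hc : ContinuousOn h (Set.Icc a b ×ˢ Set.Icc c d))
    (hle : ∀ p ∈ Set.Icc a b ×ˢ Set.Icc c d, h p ≤ 0)
    (hint : 0 ≤ ∫ p in Set.Icc a b ×ˢ Set.Icc c d, h p) :
    ∀ p ∈ Set.Icc a b ×ˢ Set.Icc c d, h p = 0 := by
  set R : Set (ℝ × ℝ) := Set.Icc a b ×ˢ Set.Icc c d with hRdef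
  have hRc : IsCompact R := isCompact_Icc.prod isCompact_Icc
  have hRm : MeasurableSet R := (measurableSet_Icc).prod (measurableSet_Icc)
  have hhi : IntegrableOn h R := hc.integrableOn_compact hRc
  intro p0 hp0
  by_contra hne
  have hneg : h p0 < 0 := lt_of_le_of_ne (hle p0 hp0) hne
  have hcw : ContinuousWithinAt h R p0 := hc p0 hp0
  have hev : {p | h p < h p0 / 2} ∈ 𝓝[R] p0 := by
    have : Set.Iio (h p0 / 2) ∈ 𝓝 (h p0) := Iio_mem_nhds (by linarith)
    exact hcw this
  obtain ⟨U, hUo, hp0U, hUsub⟩ := mem_nhdsWithin.mp hev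
  set box : Set (ℝ × ℝ) := Set.Ioo a b ×ˢ Set.Ioo c d with hboxdef
  have hboxR : box ⊆ R := Set.prod_mono Set.Ioo_subset_Icc_self Set.Ioo_subset_Icc_self
  have hboxo : IsOpen box := isOpen_Ioo.prod isOpen_Ioo
  have hclos : closure box = R := by
    rw [hboxdef, closure_prod_eq, closure_Ioo hab.ne, closure_Ioo hcd.ne]
  set B : Set (ℝ × ℝ) := U ∩ box with hBdef
  have hBo : IsOpen B := hUo.inter hboxo
  have hBne : B.Nonempty := by
    have : p0 ∈ closure box := hclos ▸ hp0
    exact _root_.mem_closure_iff.mp this U hUo hp0U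
  have hBR : B ⊆ R := fun p hp => hboxR hp.2
  have hBmeas : MeasurableSet B := hBo.measurableSet
  have hBpos : 0 < volume B := hBo.measure_pos volume hBne
  have hBfin : volume B < ⊤ := lt_of_le_of_lt (measure_mono hBR) hRc.measure_lt_top
  have hsplit : (∫ p in R ∩ B, h p) + ∫ p in R \ B, h p = ∫ p in R, h p :=
    integral_inter_add_diff hBmeas hhi
  have hRB : R ∩ B = B := Set.inter_eq_self_of_subset_right hBR
  have h1 : (∫ p in R \ B, h p) ≤ 0 :=
    setIntegral_nonpos (hRm.diff hBmeas) (fun p hp => hle p hp.1)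
  have h2 : (∫ p in B, h p) ≤ (h p0 / 2) * (volume B).toReal := by
    have : (∫ p in B, h p) ≤ ∫ _ in B, (h p0 / 2) := by
      refine setIntegral_mono_on (hhi.mono_set hBR) ?_ hBmeas ?_
      · exact integrableOn_const hBfin.ne
      · intro p hp
        exact le_of_lt (hUsub ⟨hp.1, hBR hp⟩)
    simpa [setIntegral_const, smul_eq_mul, mul_comm, measureReal_def] using this
  have htpos : 0 < (volume B).toReal := ENNReal.toReal_pos hBpos.ne' hBfin.ne
  have h3 : (h p0 / 2) * (volume B).toReal < 0 :=
    mul_neg_of_neg_of_pos (by linarith) htpos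
  rw [hRB] at hsplit
  linarith [hint, hsplit]

/-- Let `R = [a,b] × [c,d]`, let `g 0, …, g (n-1)` be linearly independent
continuous functions on `R` and let `V` be their span.  If `f : R → ℝ` is bounded below and
Lebesgue integrable on `R`, and `Y_n(f) = {h ∈ V : h ≤ f on R}` is nonempty, then there is a
best one-sided approximant from below: some `h_f ∈ Y_n(f)` whose integral over `R` equals
`sup { ∫_R h : h ∈ Y_n(f) }`. -/
theorem exists_best_one_sided_approx_from_below (a b c d : ℝ) (hab : a < b) (hcd : c < d)
    (n : ℕ) (g : Fin n → ℝ × ℝ → ℝ)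
    (hgc : ∀ i, ContinuousOn (g i) (Set.Icc a b ×ˢ Set.Icc c d))
    (hind : LinearIndependent ℝ fun i => (Set.Icc a b ×ˢ Set.Icc c d).restrict (g i))
    (f : ℝ × ℝ → ℝ) (M : ℝ) (hM : ∀ p ∈ Set.Icc a b ×ˢ Set.Icc c d, M ≤ f p)
    (hf : IntegrableOn f (Set.Icc a b ×ˢ Set.Icc c d))
    (hne : ∃ h ∈ Submodule.span ℝ (Set.range g),
      ∀ p ∈ Set.Icc a b ×ˢ Set.Icc c d, h p ≤ f p) :
    ∃ hf' ∈ Submodule.span ℝ (Set.range g),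
      (∀ p ∈ Set.Icc a b ×ˢ Set.Icc c d, hf' p ≤ f p) ∧
      (∫ p in Set.Icc a b ×ˢ Set.Icc c d, hf' p) =
        sSup {I : ℝ | ∃ h ∈ Submodule.span ℝ (Set.range g),
          (∀ p ∈ Set.Icc a b ×ˢ Set.Icc c d, h p ≤ f p) ∧
          I = ∫ p in Set.Icc a b ×ˢ Set.Icc c d, h p} := by
  set R : Set (ℝ × ℝ) := Set.Icc a b ×ˢ Set.Icc c d with hRdef
  have hRc : IsCompact R := isCompact_Icc.prod isCompact_Icc
  have hRm : MeasurableSet R := (measurableSet_Icc).prod (measurableSet_Icc)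
  have hgint : ∀ i, IntegrableOn (g i) R := fun i => (hgc i).integrableOn_compact hRc
  set Φ : (Fin n → ℝ) → (ℝ × ℝ) → ℝ := fun α p => ∑ i, α i * g i p with hΦdef
  have hΦcont : ∀ α, ContinuousOn (Φ α) R := by
    intro α
    apply continuousOn_finset_sum
    exact fun i _ => (hgc i).const_smul (α i) |>.congr (fun p _ => rfl) |>.mono (le_refl _)
  have hΦint : ∀ α, IntegrableOn (Φ α) R :=
    fun α => integrable_finset_sum _ (fun i _ => (hgint i).const_mul _)
  set L : (Fin n → ℝ) → ℝ := fun α => ∫ p in R, Φ α p with hLdef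
  have hLform : ∀ α, L α = ∑ i, α i * ∫ p in R, g i p := by
    intro α
    rw [hLdef]
    simp only [hΦdef]
    rw [integral_finset_sum _ (fun i _ => (hgint i).const_mul _)]
    exact Finset.sum_congr rfl (fun i _ => integral_const_mul _ _)
  have hLcont : Continuous L := by
    have hLeq : L = fun α => ∑ i, α i * ∫ p in R, g i p := funext hLform
    rw [hLeq]
    exact continuous_finset_sum _ (fun i _ => (continuous_apply i).mul continuous_const)
  have hevc : ∀ p, Continuous (fun α : Fin n → ℝ => Φ α p) := by
    intro p
    exact continuous_finset_sum _ (fun i _ => (continuous_apply i).mul continuous_const)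
  have hΦsmul : ∀ (c : ℝ) (α) (p), Φ (c • α) p = c * Φ α p := by
    intro c α p
    simp only [hΦdef, Pi.smul_apply, smul_eq_mul, Finset.mul_sum, mul_assoc]
  have hLsmul : ∀ (c : ℝ) (α), L (c • α) = c * L α := by
    intro c α
    simp only [hLform, Pi.smul_apply, smul_eq_mul, Finset.mul_sum, mul_assoc]
  have hsum_apply : ∀ (α : Fin n → ℝ) (p : ℝ × ℝ), (∑ i, α i • g i) p = Φ α p := by
    intro α p
    simp [hΦdef, Finset.sum_apply]
  set K : Set (Fin n → ℝ) := {α | ∀ p ∈ R, Φ α p ≤ f p} with hKdef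
  have hKclosed : IsClosed K := by
    have : K = ⋂ p ∈ R, {α | Φ α p ≤ f p} := by
      ext α; simp [hKdef, Set.mem_iInter]
    rw [this]
    exact isClosed_biInter fun p hp => isClosed_le (hevc p) continuous_const
  obtain ⟨h₀, hh₀span, hh₀le⟩ := hne
  obtain ⟨α₀, hα₀⟩ := (Submodule.mem_span_range_iff_exists_fun ℝ).mp hh₀span
  have hα₀K : α₀ ∈ K := by
    intro p hp
    rw [← hsum_apply α₀ p, hα₀]
    exact hh₀le p hp
  set K₀ : Set (Fin n → ℝ) := {α | α ∈ K ∧ L α₀ ≤ L α} with hK₀def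
  have hK₀closed : IsClosed K₀ := hKclosed.inter (isClosed_le continuous_const hLcont)
  have hα₀K₀ : α₀ ∈ K₀ := ⟨hα₀K, le_refl _⟩
  -- Key boundedness claim
  have hbdd : ∃ C : ℝ, ∀ α ∈ K₀, ‖α‖ ≤ C := by
    by_contra hcon
    push_neg at hcon
    choose u hu hnorm using fun k : ℕ => hcon ((k : ℝ) + 1)
    have hupos : ∀ k, 0 < ‖u k‖ := fun k => lt_of_le_of_lt (by positivity) (hnorm k)
    set w : ℕ → Fin n → ℝ := fun k => (‖u k‖)⁻¹ • u k with hwdef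
    have hwn : ∀ k, ‖w k‖ = 1 := by
      intro k
      rw [hwdef]
      simp [norm_smul, abs_of_pos (inv_pos.2 (hupos k)), inv_mul_cancel₀ (hupos k).ne']
    have hwsph : ∀ k, w k ∈ Metric.sphere (0 : Fin n → ℝ) 1 := fun k => by
      simp [mem_sphere_zero_iff_norm, hwn k]
    obtain ⟨β, hβsph, φ, hφmono, hφlim⟩ :=
      (isCompact_sphere (0 : Fin n → ℝ) 1).tendsto_subseq hwsph
    have hβnorm : ‖β‖ = 1 := mem_sphere_zero_iff_norm.mp hβsph
    have hinf : Tendsto (fun j => ‖u (φ j)‖) atTop atTop := by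
      apply tendsto_atTop_mono (fun j => ?_) 
      · exact tendsto_natCast_atTop_atTop
      · calc (j : ℝ) ≤ (φ j : ℝ) := by exact_mod_cast hφmono.le_apply
          _ ≤ (φ j : ℝ) + 1 := by linarith
          _ ≤ ‖u (φ j)‖ := (hnorm (φ j)).le
    have hinv0 : Tendsto (fun j => (‖u (φ j)‖)⁻¹) atTop (𝓝 0) :=
      tendsto_inv_atTop_zero.comp hinf
    have hΦβ : ∀ p ∈ R, Φ β p ≤ 0 := by
      intro p hp
      have hA : Tendsto (fun j => Φ (w (φ j)) p) atTop (𝓝 (Φ β p)) :=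
        ((hevc p).tendsto β).comp hφlim
      have hB : Tendsto (fun j => (‖u (φ j)‖)⁻¹ * f p) atTop (𝓝 0) := by
        simpa using hinv0.mul_const (f p)
      refine le_of_tendsto_of_tendsto' hA hB (fun j => ?_)
      rw [hwdef, hΦsmul]
      exact mul_le_mul_of_nonneg_left ((hu (φ j)).1 p hp) (inv_nonneg.2 (hupos _).le)
    have hLβ : 0 ≤ L β := by
      have hA : Tendsto (fun j => L (w (φ j))) atTop (𝓝 (L β)) :=
        (hLcont.tendsto β).comp hφlim
      have hB : Tendsto (fun j => (‖u (φ j)‖)⁻¹ * L α₀) atTop (𝓝 0) := by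
        simpa using hinv0.mul_const (L α₀)
      refine le_of_tendsto_of_tendsto' hB hA (fun j => ?_)
      rw [hwdef, hLsmul]
      exact mul_le_mul_of_nonneg_left ((hu (φ j)).2) (inv_nonneg.2 (hupos _).le)
    have hzero : ∀ p ∈ R, Φ β p = 0 :=
      nonpos_cont_integral_zero a b c d hab hcd (Φ β) (hΦcont β) hΦβ hLβ
    have hβ0 : β = 0 := by
      have h0 : ∑ i, β i • (R.restrict (g i)) = 0 := by
        funext p
        have hz := hzero p.1 p.2
        simp only [hΦdef] at hz
        simp [Finset.sum_apply, Set.restrict_apply, hz]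
        exact hz
      funext i
      exact Fintype.linearIndependent_iff.mp hind β h0 i
    rw [hβ0] at hβnorm
    simp at hβnorm
  obtain ⟨C, hC⟩ := hbdd
  have hK₀comp : IsCompact K₀ :=
    Metric.isCompact_of_isClosed_isBounded hK₀closed
      (isBounded_iff_forall_norm_le.2 ⟨C, hC⟩)
  obtain ⟨αm, hαmK₀, hmax⟩ :=
    hK₀comp.exists_isMaxOn ⟨α₀, hα₀K₀⟩ hLcont.continuousOn
  refine ⟨Φ αm, ?_, fun p hp => hαmK₀.1 p hp, ?_⟩
  · exact (Submodule.mem_span_range_iff_exists_fun ℝ).mpr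
      ⟨αm, funext fun p => hsum_apply αm p⟩
  · set S : Set ℝ := {I : ℝ | ∃ h ∈ Submodule.span ℝ (Set.range g),
        (∀ p ∈ R, h p ≤ f p) ∧ I = ∫ p in R, h p} with hSdef
    have hub : ∀ I ∈ S, I ≤ L αm := by
      rintro I ⟨h, hspan, hhle, rfl⟩
      obtain ⟨α', hα'⟩ := (Submodule.mem_span_range_iff_exists_fun ℝ).mp hspan
      have hfun : h = fun p => Φ α' p := by
        funext p; rw [← hα', hsum_apply]
      have hIeq : (∫ p in R, h p) = L α' := by rw [hfun, hLdef]
      rw [hIeq]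
      rcases le_or_gt (L α₀) (L α') with hcase | hcase
      · have hα'K : α' ∈ K := by
          intro p hp
          rw [hfun] at hhle
          exact hhle p hp
        exact hmax ⟨hα'K, hcase⟩
      · exact le_trans hcase.le (hmax hα₀K₀)
    have hmem : L αm ∈ S := by
      refine ⟨Φ αm, ?_, fun p hp => hαmK₀.1 p hp, rfl⟩
      exact (Submodule.mem_span_range_iff_exists_fun ℝ).mpr
        ⟨αm, funext fun p => hsum_apply αm p⟩
    exact le_antisymm (le_csSup ⟨L αm, hub⟩ hmem) (csSup_le ⟨L αm, hmem⟩ hub)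
end

section
/- Let (X, ‖·‖) be a Banach space and T : X → X a linear operator. Suppose there exist constants λ₁, λ₂ ∈ [0,1) such that ‖Tx − x‖ ≤ λ₁‖x‖ + λ₂‖Tx‖ for all x ∈ X. Then T is a topological isomorphism (a continuous linear bijection with continuous inverse), and ((1−λ₂)/(1+λ₁))‖x‖ ≤ ‖T⁻¹x‖ ≤ ((1+λ₂)/(1−λ₁))‖x‖ for all x ∈ X. -/
open scoped NNReal ENNReal

/-- Uniform lower bound along the homotopy `x ↦ x + t • (T x - x)` for `t ∈ [0,1]`. -/
lemma homotopy_lower_bound {X : Type*} [NormedAddCommGroup X] [NormedSpace ℝ X]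
    (T : X →ₗ[ℝ] X) (l₁ l₂ : ℝ)
    (hl₁ : 0 ≤ l₁) (hl₁' : l₁ < 1) (hl₂ : 0 ≤ l₂) (hl₂' : l₂ < 1)
    (h : ∀ x : X, ‖T x - x‖ ≤ l₁ * ‖x‖ + l₂ * ‖T x‖)
    {t : ℝ} (ht0 : 0 ≤ t) (ht1 : t ≤ 1) (x : X) :
    ‖x‖ ≤ (1 + (l₁ + l₂) / (1 - max l₁ l₂)) * ‖x + t • (T x - x)‖ := by
  set u := T x - x with hu
  set y := x + t • u with hy
  have hmax : max l₁ l₂ < 1 := max_lt hl₁' hl₂'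
  have hml : (0:ℝ) < 1 - max l₁ l₂ := by linarith
  have hx : ‖x‖ ≤ ‖y‖ + t * ‖u‖ := by
    calc ‖x‖ = ‖y - t • u‖ := by rw [hy]; congr 1; module
    _ ≤ ‖y‖ + ‖t • u‖ := norm_sub_le _ _
    _ = ‖y‖ + t * ‖u‖ := by rw [norm_smul, Real.norm_of_nonneg ht0]
  have hTx : ‖T x‖ ≤ ‖y‖ + (1 - t) * ‖u‖ := by
    calc ‖T x‖ = ‖y + (1 - t) • u‖ := by
          rw [hy, hu]; congr 1; module
    _ ≤ ‖y‖ + ‖(1 - t) • u‖ := norm_add_le _ _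
    _ = ‖y‖ + (1 - t) * ‖u‖ := by
          rw [norm_smul, Real.norm_of_nonneg (by linarith)]
  have hu' : ‖u‖ ≤ l₁ * ‖x‖ + l₂ * ‖T x‖ := h x
  have hconv : t * l₁ + (1 - t) * l₂ ≤ max l₁ l₂ := by
    have h1 : l₁ ≤ max l₁ l₂ := le_max_left _ _
    have h2 : l₂ ≤ max l₁ l₂ := le_max_right _ _
    nlinarith
  have key : (1 - max l₁ l₂) * ‖u‖ ≤ (l₁ + l₂) * ‖y‖ := by
    have hun : (0:ℝ) ≤ ‖u‖ := norm_nonneg _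
    nlinarith [mul_le_mul_of_nonneg_left hx hl₁, mul_le_mul_of_nonneg_left hTx hl₂]
  have hu2 : ‖u‖ ≤ (l₁ + l₂) / (1 - max l₁ l₂) * ‖y‖ := by
    rw [div_mul_eq_mul_div, le_div_iff₀ hml]; nlinarith [key]
  have hyn : (0:ℝ) ≤ ‖y‖ := norm_nonneg _
  have htu : t * ‖u‖ ≤ ‖u‖ := by nlinarith [norm_nonneg u]
  calc ‖x‖ ≤ ‖y‖ + t * ‖u‖ := hx
  _ ≤ ‖y‖ + ‖u‖ := by linarith
  _ ≤ (1 + (l₁ + l₂) / (1 - max l₁ l₂)) * ‖y‖ := by nlinarith [hu2]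

/-- Let `X` be a Banach space and `T : X → X` a linear operator such that
`‖T x − x‖ ≤ λ₁ ‖x‖ + λ₂ ‖T x‖` for all `x`, where `λ₁, λ₂ ∈ [0,1)`.  Then `T` is a
topological isomorphism and `(1−λ₂)/(1+λ₁) ‖x‖ ≤ ‖T⁻¹ x‖ ≤ (1+λ₂)/(1−λ₁) ‖x‖` for all `x`. -/
theorem topological_isomorphism_of_norm_estimate {X : Type*} [NormedAddCommGroup X]
    [NormedSpace ℝ X] [CompleteSpace X] (T : X →ₗ[ℝ] X) (l₁ l₂ : ℝ)
    (hl₁ : 0 ≤ l₁) (hl₁' : l₁ < 1) (hl₂ : 0 ≤ l₂) (hl₂' : l₂ < 1)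
    (h : ∀ x : X, ‖T x - x‖ ≤ l₁ * ‖x‖ + l₂ * ‖T x‖) :
    ∃ e : X ≃L[ℝ] X, (∀ x : X, e x = T x) ∧
      ∀ x : X, (1 - l₂) / (1 + l₁) * ‖x‖ ≤ ‖e.symm x‖ ∧
        ‖e.symm x‖ ≤ (1 + l₂) / (1 - l₁) * ‖x‖ := by
  -- basic norm inequalities
  have hub : ∀ x : X, (1 - l₂) * ‖T x‖ ≤ (1 + l₁) * ‖x‖ := by
    intro x
    have h1 : ‖T x‖ - ‖x‖ ≤ ‖T x - x‖ := by
      have := norm_sub_norm_le (T x) x; linarith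
    have := h x; nlinarith
  have hlb : ∀ x : X, (1 - l₁) * ‖x‖ ≤ (1 + l₂) * ‖T x‖ := by
    intro x
    have h1 : ‖x‖ - ‖T x‖ ≤ ‖T x - x‖ := by
      have := norm_sub_norm_le x (T x)
      rw [norm_sub_rev] at this; linarith
    have := h x; nlinarith
  have h2pos : (0:ℝ) < 1 - l₂ := by linarith
  have h1pos : (0:ℝ) < 1 - l₁ := by linarith
  -- T is continuous
  set T' : X →L[ℝ] X := T.mkContinuous ((1 + l₁) / (1 - l₂)) (fun x => by
    rw [div_mul_eq_mul_div, le_div_iff₀ h2pos]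
    have := hub x; nlinarith) with hT'
  have hT'app : ∀ x, T' x = T x := fun x => rfl
  rcases subsingleton_or_nontrivial X with hX | hX
  · refine ⟨ContinuousLinearEquiv.refl ℝ X, fun x => Subsingleton.elim _ _, fun x => ?_⟩
    have hx : ‖x‖ = 0 := by rw [Subsingleton.elim x 0, norm_zero]
    constructor
    · rw [hx, mul_zero]; exact norm_nonneg _
    · have : ‖(ContinuousLinearEquiv.refl ℝ X).symm x‖ = 0 := by
        rw [Subsingleton.elim ((ContinuousLinearEquiv.refl ℝ X).symm x) 0, norm_zero]
      rw [this]; positivity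
  -- the homotopy
  set C : ℝ := 1 + (l₁ + l₂) / (1 - max l₁ l₂) with hC
  have hCpos : 0 < C := by
    have : 0 ≤ (l₁ + l₂) / (1 - max l₁ l₂) := by
      apply div_nonneg (by linarith)
      have : max l₁ l₂ < 1 := max_lt hl₁' hl₂'
      linarith
    rw [hC]; linarith
  set f : ℝ → (X →L[ℝ] X) := fun t => 1 + t • (T' - 1) with hf
  have hfapp : ∀ t x, f t x = x + t • (T x - x) := by
    intro t x
    simp [hf, ContinuousLinearMap.add_apply, ContinuousLinearMap.smul_apply,
      ContinuousLinearMap.sub_apply, ContinuousLinearMap.one_apply, hT'app]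
  have hlow : ∀ t, 0 ≤ t → t ≤ 1 → ∀ x : X, ‖x‖ ≤ C * ‖f t x‖ := by
    intro t ht0 ht1 x
    rw [hfapp]
    exact homotopy_lower_bound T l₁ l₂ hl₁ hl₁' hl₂ hl₂' h ht0 ht1 x
  -- inverse norm bound for units along the homotopy
  have hinv : ∀ t, 0 ≤ t → t ≤ 1 → ∀ u : (X →L[ℝ] X)ˣ, (u : X →L[ℝ] X) = f t →
      ‖((u⁻¹ : (X →L[ℝ] X)ˣ) : X →L[ℝ] X)‖ ≤ C := by
    intro t ht0 ht1 u hu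
    apply ContinuousLinearMap.opNorm_le_bound _ hCpos.le
    intro y
    have h1 : f t (((u⁻¹ : (X →L[ℝ] X)ˣ) : X →L[ℝ] X) y) = y := by
      rw [← hu]
      have : ((u : X →L[ℝ] X) * ((u⁻¹ : (X →L[ℝ] X)ˣ) : X →L[ℝ] X)) y = y := by
        rw [u.mul_inv]; rfl
      rwa [ContinuousLinearMap.mul_apply] at this
    calc ‖((u⁻¹ : (X →L[ℝ] X)ˣ) : X →L[ℝ] X) y‖
        ≤ C * ‖f t (((u⁻¹ : (X →L[ℝ] X)ˣ) : X →L[ℝ] X) y)‖ := hlow t ht0 ht1 _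
    _ = C * ‖y‖ := by rw [h1]
  -- step size
  obtain ⟨n, hn⟩ := exists_nat_gt (C * ‖T' - 1‖)
  have hn0 : 0 < n := by
    by_contra hn0
    push_neg at hn0
    interval_cases n
    have : 0 ≤ C * ‖T' - 1‖ := mul_nonneg hCpos.le (norm_nonneg _)
    simp at hn
    linarith
  have hnR : (0:ℝ) < n := Nat.cast_pos.mpr hn0
  -- induction up the ladder
  have hstep : ∀ k : ℕ, k ≤ n → IsUnit (f (k / n)) := by
    intro k
    induction k with
    | zero =>
      intro _
      have : f ((0:ℕ) / n) = 1 := by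
        simp [hf]
      rw [this]; exact isUnit_one
    | succ k ih =>
      intro hk1
      obtain ⟨u, hu⟩ := ih (by omega)
      have hk0 : (0:ℝ) ≤ (k:ℝ) / n := by positivity
      have hk1' : (k:ℝ) / n ≤ 1 := by
        rw [div_le_one hnR]; exact_mod_cast Nat.le_of_succ_le hk1
      have hinvpos : 0 < ‖((u⁻¹ : (X →L[ℝ] X)ˣ) : X →L[ℝ] X)‖ := Units.norm_pos _
      have hinvle : ‖((u⁻¹ : (X →L[ℝ] X)ˣ) : X →L[ℝ] X)‖ ≤ C := hinv _ hk0 hk1' u hu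
      have hdiff : f (((k:ℕ)+1 : ℕ) / n) - (u : X →L[ℝ] X) = ((1:ℝ)/n) • (T' - 1) := by
        rw [hu, hf]
        push_cast
        rw [show ((1:X →L[ℝ] X) + (((k:ℝ)+1)/n) • (T' - 1)) - (1 + ((k:ℝ)/n) • (T' - 1))
            = ((((k:ℝ)+1)/n) - ((k:ℝ)/n)) • (T' - 1) by module]
        congr 1
        field_simp
        ring
      have hnear : ‖f (((k:ℕ)+1 : ℕ) / n) - (u : X →L[ℝ] X)‖
          < ‖((u⁻¹ : (X →L[ℝ] X)ˣ) : X →L[ℝ] X)‖⁻¹ := by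
        rw [hdiff]
        have hsle : ‖((1:ℝ)/n) • (T' - 1)‖ ≤ (1/n : ℝ) * ‖T' - 1‖ := by
          have := ContinuousLinearMap.opNorm_smul_le ((1:ℝ)/n) (T' - 1)
          rwa [Real.norm_of_nonneg (by positivity : (0:ℝ) ≤ 1/n)] at this
        have h1 : (1/n : ℝ) * ‖T' - 1‖ < C⁻¹ := by
          rw [inv_eq_one_div, div_mul_eq_mul_div, one_mul, div_lt_div_iff₀ hnR hCpos]
          nlinarith
        have h2 : C⁻¹ ≤ ‖((u⁻¹ : (X →L[ℝ] X)ˣ) : X →L[ℝ] X)‖⁻¹ :=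
          inv_anti₀ hinvpos hinvle
        linarith
      exact (u.ofNearby _ hnear).isUnit
  have hfu : IsUnit T' := by
    have := hstep n le_rfl
    rw [div_self (ne_of_gt hnR)] at this
    have h1 : f 1 = T' := by rw [hf]; simp
    rwa [h1] at this
  obtain ⟨u, hu⟩ := hfu
  have hleft : ∀ x, ((u⁻¹ : (X →L[ℝ] X)ˣ) : X →L[ℝ] X) (T' x) = x := by
    intro x
    have : (((u⁻¹ : (X →L[ℝ] X)ˣ) : X →L[ℝ] X) * (u : X →L[ℝ] X)) x = x := by
      rw [u.inv_mul]; rfl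
    rw [← hu]
    rwa [ContinuousLinearMap.mul_apply] at this
  have hright : ∀ x, T' (((u⁻¹ : (X →L[ℝ] X)ˣ) : X →L[ℝ] X) x) = x := by
    intro x
    have : ((u : X →L[ℝ] X) * ((u⁻¹ : (X →L[ℝ] X)ˣ) : X →L[ℝ] X)) x = x := by
      rw [u.mul_inv]; rfl
    rw [← hu]
    rwa [ContinuousLinearMap.mul_apply] at this
  have h1plus : (0:ℝ) < 1 + l₁ := by linarith
  have key : ∀ z : X, (1 - l₂) / (1 + l₁) * ‖T z‖ ≤ ‖z‖ ∧
      ‖z‖ ≤ (1 + l₂) / (1 - l₁) * ‖T z‖ := by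
    intro z
    constructor
    · rw [div_mul_eq_mul_div, div_le_iff₀ h1plus]; nlinarith [hub z]
    · rw [div_mul_eq_mul_div, le_div_iff₀ h1pos]; nlinarith [hlb z]
  refine ⟨ContinuousLinearEquiv.equivOfInverse T' _ hleft hright, fun x => rfl, fun x => ?_⟩
  have hez : T ((ContinuousLinearEquiv.equivOfInverse T' _ hleft hright).symm x) = x :=
    (ContinuousLinearEquiv.equivOfInverse T' _ hleft hright).apply_symm_apply x
  constructor
  · have := (key ((ContinuousLinearEquiv.equivOfInverse T' _ hleft hright).symm x)).1
    rwa [hez] at this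
  · have := (key ((ContinuousLinearEquiv.equivOfInverse T' _ hleft hright).symm x)).2
    rwa [hez] at this
end

section
/- Let X be a compact subset of ℝ^m and Y = ℝ^n. Suppose there exists a continuous function f : X → Y with dimH(Gr(f)) > dimH(X), and suppose the Lipschitz functions from X to Y are dense in C(X,Y) with respect to the supremum norm. Then the set {(β, g) ∈ ℝ × C(X,Y) : dimH(Gr(g)) = β} (the graph of the set-valued map Φ(β) = S_β) is not closed in ℝ × C(X,Y). -/
open MeasureTheory Set
open scoped NNReal ENNReal

lemma dimH_graph_of_lipschitz {m n : ℕ}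
    (K : Set (EuclideanSpace ℝ (Fin m)))
    (g : C(↥K, EuclideanSpace ℝ (Fin n))) {L : ℝ≥0} (hg : LipschitzWith L g) :
    dimH (Set.range fun x : ↥K => ((x : EuclideanSpace ℝ (Fin m)), g x)) = dimH K := by
  set φ : ↥K → EuclideanSpace ℝ (Fin m) × EuclideanSpace ℝ (Fin n) :=
    fun x => ((x : EuclideanSpace ℝ (Fin m)), g x)
  have hlip := LipschitzWith.prodMk ((LipschitzWith.subtype_val K).weaken (le_max_left 1 L))
      (hg.weaken (le_max_right 1 L))
  have hanti : AntilipschitzWith 1 φ := by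
    intro x y
    simp only [ENNReal.coe_one, one_mul, φ]
    exact le_trans (le_max_left _ _) (le_of_eq rfl)
  have hK : dimH (univ : Set ↥K) = dimH K := by
    have hiso : Isometry ((↑) : ↥K → EuclideanSpace ℝ (Fin m)) := isometry_subtype_coe
    have h2 := hiso.dimH_image (univ : Set ↥K)
    rw [image_univ, Subtype.range_coe] at h2
    exact h2.symm
  rw [← image_univ, ← hK]
  exact le_antisymm (hlip.dimH_image_le univ) (hanti.le_dimH_image univ)

/-- Let `X ⊆ ℝ^m` be compact and `Y = ℝ^n`.  If there is a continuous
`f : X → Y` with `dimH (Gr f) > dimH X`, and the Lipschitz functions are dense in `C(X,Y)`,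
then the graph `{(β, g) : dimH (Gr g) = β}` of the set-valued map `Φ(β) = S_β` is not
closed in `ℝ × C(X,Y)`. -/
theorem graph_of_dimH_level_map_not_closed {m n : ℕ}
    (K : Set (EuclideanSpace ℝ (Fin m))) [CompactSpace ↥K]
    (f : C(↥K, EuclideanSpace ℝ (Fin n)))
    (hf : dimH K <
      dimH (Set.range fun x : ↥K => ((x : EuclideanSpace ℝ (Fin m)), f x)))
    (hLip : Dense {g : C(↥K, EuclideanSpace ℝ (Fin n)) | ∃ L : ℝ≥0, LipschitzWith L g}) :
    ¬ IsClosed {p : ℝ × C(↥K, EuclideanSpace ℝ (Fin n)) |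
      dimH (Set.range fun x : ↥K => ((x : EuclideanSpace ℝ (Fin m)), p.2 x)) =
        ENNReal.ofReal p.1} := by
  intro hclosed
  have hfin : dimH K ≠ ∞ := by
    have : dimH K ≤ (m : ℝ≥0∞) := by
      calc dimH K ≤ dimH (univ : Set (EuclideanSpace ℝ (Fin m))) := dimH_mono (subset_univ K)
        _ = (Module.finrank ℝ (EuclideanSpace ℝ (Fin m)) : ℝ≥0∞) :=
          Real.dimH_univ_eq_finrank _
        _ = (m : ℝ≥0∞) := by simp
    exact ne_top_of_le_ne_top (by simp) this
  set β : ℝ := (dimH K).toReal with hβ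
  have hofReal : ENNReal.ofReal β = dimH K := ENNReal.ofReal_toReal hfin
  -- get a sequence of Lipschitz functions converging to f
  obtain ⟨g, hgmem, hgtend⟩ := mem_closure_iff_seq_limit.mp (hLip f)
  have hmem : ∀ k, ((β, g k)) ∈ {p : ℝ × C(↥K, EuclideanSpace ℝ (Fin n)) |
      dimH (Set.range fun x : ↥K => ((x : EuclideanSpace ℝ (Fin m)), p.2 x)) =
        ENNReal.ofReal p.1} := by
    intro k
    obtain ⟨L, hL⟩ := hgmem k
    simpa [hofReal] using dimH_graph_of_lipschitz K (g k) hL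
  have htend : Filter.Tendsto (fun k => ((β, g k))) Filter.atTop (nhds (β, f)) :=
    (tendsto_const_nhds.prodMk_nhds hgtend)
  have : ((β, f)) ∈ {p : ℝ × C(↥K, EuclideanSpace ℝ (Fin n)) |
      dimH (Set.range fun x : ↥K => ((x : EuclideanSpace ℝ (Fin m)), p.2 x)) =
        ENNReal.ofReal p.1} := hclosed.mem_of_tendsto htend (Filter.Eventually.of_forall hmem)
  simp only [mem_setOf_eq, hofReal] at this
  exact absurd this (ne_of_gt hf)
end

section
/- Let (X,d) be a compact metric space and (Y,‖·‖_Y) a real normed linear space. Then the set Lip(X,Y) of Lipschitz functions from X to Y is dense in the space C(X,Y) of continuous functions from X to Y with respect to the supremum norm: for every continuous f : X → Y and every ε > 0 there exists a Lipschitz function g : X → Y with sup_{x∈X} ‖f(x) − g(x)‖_Y < ε. -/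
open scoped NNReal ENNReal

/-- Let `X` be a compact metric space and `Y` a real normed linear space.
Then the Lipschitz functions `X → Y` are dense in `C(X,Y)` with respect to the supremum
norm: for every continuous `f : X → Y` and every `ε > 0` there is a Lipschitz `g : X → Y`
with `‖f x − g x‖ < ε` for all `x ∈ X`. -/
theorem lipschitz_dense_in_continuous {X Y : Type*} [MetricSpace X] [CompactSpace X]
    [NormedAddCommGroup Y] [NormedSpace ℝ Y]
    (f : X → Y) (hf : Continuous f) (ε : ℝ) (hε : 0 < ε) :
    ∃ (g : X → Y) (L : ℝ≥0), LipschitzWith L g ∧ ∀ x : X, ‖f x - g x‖ < ε := by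
  rcases isEmpty_or_nonempty X with hX | hX
  · exact ⟨f, 0, fun x => isEmptyElim x, fun x => isEmptyElim x⟩
  -- uniform continuity
  obtain ⟨δ, hδ, hδf⟩ := Metric.uniformContinuous_iff.mp
    (CompactSpace.uniformContinuous_of_continuous hf) (ε/2) (half_pos hε)
  -- finite cover by balls of radius δ
  obtain ⟨t, ht⟩ := isCompact_univ.elim_finite_subcover (fun i : X => Metric.ball i δ)
    (fun i => Metric.isOpen_ball) (fun x _ => Set.mem_iUnion.mpr ⟨x, Metric.mem_ball_self hδ⟩)
  set φ : X → X → ℝ := fun i x => max (δ - dist x i) 0 with hφdef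
  have hφ_nonneg : ∀ i x, 0 ≤ φ i x := fun i x => le_max_right _ _
  have hφ_le : ∀ i x, φ i x ≤ δ := fun i x =>
    max_le (by linarith [dist_nonneg (x := x) (y := i)]) hδ.le
  have hφ_lip : ∀ i x y, |φ i x - φ i y| ≤ dist x y := by
    intro i x y
    calc |φ i x - φ i y| ≤ |(δ - dist x i) - (δ - dist y i)| :=
          abs_max_sub_max_le_abs _ _ _
      _ = |dist x i - dist y i| := by rw [abs_sub_comm]; ring_nf
      _ ≤ dist x y := abs_dist_sub_le x y i
  set S : X → ℝ := fun x => ∑ i ∈ t, φ i x with hSdef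
  have hS_pos : ∀ x, 0 < S x := by
    intro x
    obtain ⟨i, hi, hxi⟩ := Set.mem_iUnion₂.mp (ht (Set.mem_univ x))
    refine Finset.sum_pos' (fun j _ => hφ_nonneg j x) ⟨i, hi, ?_⟩
    have hd : dist x i < δ := Metric.mem_ball.mp hxi
    exact lt_max_of_lt_left (by linarith)
  have hS_le : ∀ x, S x ≤ t.card * δ := by
    intro x
    calc S x ≤ ∑ _i ∈ t, δ := Finset.sum_le_sum fun i _ => hφ_le i x
      _ = t.card * δ := by rw [Finset.sum_const, nsmul_eq_mul]
  have hS_lip : ∀ x y, |S x - S y| ≤ t.card * dist x y := by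
    intro x y
    calc |S x - S y| = |∑ i ∈ t, (φ i x - φ i y)| := by rw [Finset.sum_sub_distrib]
      _ ≤ ∑ i ∈ t, |φ i x - φ i y| := Finset.abs_sum_le_sum_abs _ _
      _ ≤ ∑ _i ∈ t, dist x y := Finset.sum_le_sum fun i _ => hφ_lip i x y
      _ = t.card * dist x y := by rw [Finset.sum_const, nsmul_eq_mul]
  have hS_cont : Continuous S := by
    refine continuous_finset_sum t fun i _ => ?_
    exact (continuous_const.sub (continuous_id.dist continuous_const)).max continuous_const
  obtain ⟨x₀, -, hx₀⟩ := isCompact_univ.exists_isMinOn Set.univ_nonempty hS_cont.continuousOn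
  set c : ℝ := S x₀ with hcdef
  have hc : 0 < c := hS_pos x₀
  have hcS : ∀ x, c ≤ S x := fun x => hx₀ (Set.mem_univ x)
  set ψ : X → X → ℝ := fun i x => φ i x / S x with hψdef
  have hψ_nonneg : ∀ i x, 0 ≤ ψ i x := fun i x =>
    div_nonneg (hφ_nonneg i x) (hS_pos x).le
  have hψ_sum : ∀ x, ∑ i ∈ t, ψ i x = 1 := by
    intro x
    simp only [hψdef]
    rw [← Finset.sum_div]
    exact div_self (hS_pos x).ne'
  set g : X → Y := fun x => ∑ i ∈ t, ψ i x • f i with hgdef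
  set K : ℝ := 2 * t.card * δ / (c * c) with hKdef
  have hK : 0 ≤ K := by positivity
  have hψ_lip : ∀ i x y, |ψ i x - ψ i y| ≤ K * dist x y := by
    intro i x y
    have hx := hS_pos x
    have hy := hS_pos y
    have key : ψ i x - ψ i y =
        ((φ i x - φ i y) * S y + φ i y * (S y - S x)) / (S x * S y) := by
      field_simp [hψdef]
      simp only [hψdef]; field_simp
      ring
    rw [key, abs_div, abs_of_pos (mul_pos hx hy)]
    have hnum : |(φ i x - φ i y) * S y + φ i y * (S y - S x)| ≤
        2 * t.card * δ * dist x y := by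
      calc |(φ i x - φ i y) * S y + φ i y * (S y - S x)|
          ≤ |φ i x - φ i y| * |S y| + |φ i y| * |S y - S x| := by
            refine (abs_add_le _ _).trans ?_
            rw [abs_mul, abs_mul]
        _ ≤ dist x y * (t.card * δ) + δ * (t.card * dist x y) := by
            gcongr
            · exact hφ_lip i x y
            · rw [abs_of_pos hy]; exact hS_le y
            · rw [abs_of_nonneg (hφ_nonneg i y)]; exact hφ_le i y
            · rw [abs_sub_comm]; exact hS_lip x y
        _ = 2 * t.card * δ * dist x y := by ring
    calc |(φ i x - φ i y) * S y + φ i y * (S y - S x)| / (S x * S y)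
        ≤ 2 * t.card * δ * dist x y / (c * c) := by
          refine div_le_div₀ (by positivity) hnum (by positivity) ?_
          exact mul_le_mul (hcS x) (hcS y) hc.le (hS_pos x).le
      _ = K * dist x y := by rw [hKdef]; ring
  set C : ℝ := K * ∑ i ∈ t, ‖f i‖ with hCdef
  have hC : 0 ≤ C := by positivity
  refine ⟨g, ⟨C, hC⟩, ?_, ?_⟩
  · refine LipschitzWith.of_dist_le_mul fun x y => ?_
    have hxy : g x - g y = ∑ i ∈ t, (ψ i x - ψ i y) • f i := by
      simp [hgdef, sub_smul, Finset.sum_sub_distrib]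
    rw [dist_eq_norm, hxy]
    calc ‖∑ i ∈ t, (ψ i x - ψ i y) • f i‖
        ≤ ∑ i ∈ t, |ψ i x - ψ i y| * ‖f i‖ := by
          refine (norm_sum_le _ _).trans (le_of_eq ?_)
          refine Finset.sum_congr rfl fun i _ => ?_
          rw [norm_smul, Real.norm_eq_abs]
      _ ≤ ∑ i ∈ t, K * dist x y * ‖f i‖ :=
          Finset.sum_le_sum fun i _ =>
            mul_le_mul_of_nonneg_right (hψ_lip i x y) (norm_nonneg _)
      _ = C * dist x y := by rw [← Finset.mul_sum, hCdef]; ring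
  · intro x
    have h1 : f x - g x = ∑ i ∈ t, ψ i x • (f x - f i) := by
      simp only [smul_sub, Finset.sum_sub_distrib, hgdef, ← Finset.sum_smul, hψ_sum, one_smul]
    rw [h1]
    calc ‖∑ i ∈ t, ψ i x • (f x - f i)‖
        ≤ ∑ i ∈ t, ψ i x * ‖f x - f i‖ := by
          refine (norm_sum_le _ _).trans (le_of_eq ?_)
          refine Finset.sum_congr rfl fun i _ => ?_
          rw [norm_smul, Real.norm_eq_abs, abs_of_nonneg (hψ_nonneg i x)]
      _ ≤ ∑ i ∈ t, ψ i x * (ε/2) := by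
          refine Finset.sum_le_sum fun i _ => ?_
          rcases eq_or_lt_of_le (hφ_nonneg i x) with h | h
          · simp [hψdef, ← h]
          · have hd : dist x i < δ := by
              by_contra hd
              have h0 : φ i x = 0 := max_eq_right (by linarith [not_lt.mp hd])
              rw [h0] at h; exact lt_irrefl 0 h
            have hfd : ‖f x - f i‖ ≤ ε/2 := by
              rw [← dist_eq_norm]; exact (hδf hd).le
            exact mul_le_mul_of_nonneg_left hfd (hψ_nonneg i x)
      _ = ε/2 := by rw [← Finset.sum_mul, hψ_sum, one_mul]
      _ < ε := by linarith
end
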